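/- arXiv:2408.01020 — 3 statements merged into one kernel-verified Lean document; each statement's English description precedes it below -/
import Mathlib

section
/- The three-dimensional Riemannian metric ds² = dq₁² + dq₂² + (V₀ e^{q₁−q₂} − h)^{-1} dz² has vanishing Cotton–York tensor (i.e. is conformally flat) when h = 0. -/
open Finset

/-- Partial derivative of a scalar function on `ℝ³` in the `i`-th coordinate
direction. -/
noncomputable def pd (i : Fin 3) (f : (Fin 3 → ℝ) → ℝ) (p : Fin 3 → ℝ) : ℝ :=
  deriv (fun s => f (Function.update p i s)) (p i)

/-- Christoffel symbols `Γᵏᵢⱼ` of a metric `G` with inverse `Ginv` on `ℝ³`. -/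
noncomputable def christoffel (G Ginv : (Fin 3 → ℝ) → Matrix (Fin 3) (Fin 3) ℝ)
    (k i j : Fin 3) (p : Fin 3 → ℝ) : ℝ :=
  (1 / 2) * ∑ l, Ginv p k l *
    (pd i (fun x => G x l j) p + pd j (fun x => G x l i) p - pd l (fun x => G x i j) p)

/-- Ricci tensor `Rᵢⱼ = ∂ₖΓᵏᵢⱼ − ∂ᵢΓᵏₖⱼ + ΓᵏₖₗΓˡᵢⱼ − ΓᵏᵢₗΓˡₖⱼ`. -/
noncomputable def ricci (G Ginv : (Fin 3 → ℝ) → Matrix (Fin 3) (Fin 3) ℝ)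
    (i j : Fin 3) (p : Fin 3 → ℝ) : ℝ :=
  (∑ k, (pd k (fun x => christoffel G Ginv k i j x) p
        - pd i (fun x => christoffel G Ginv k k j x) p))
  + ∑ k, ∑ l, (christoffel G Ginv k k l p * christoffel G Ginv l i j p
        - christoffel G Ginv k i l p * christoffel G Ginv l k j p)

/-- Scalar curvature `R = Gⁱʲ Rᵢⱼ`. -/
noncomputable def scalarCurv (G Ginv : (Fin 3 → ℝ) → Matrix (Fin 3) (Fin 3) ℝ)
    (p : Fin 3 → ℝ) : ℝ :=
  ∑ i, ∑ j, Ginv p i j * ricci G Ginv i j p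

/-- Covariant derivative of the Ricci tensor, `R_{μν;κ}`. -/
noncomputable def covRicci (G Ginv : (Fin 3 → ℝ) → Matrix (Fin 3) (Fin 3) ℝ)
    (μ ν κ : Fin 3) (p : Fin 3 → ℝ) : ℝ :=
  pd κ (fun x => ricci G Ginv μ ν x) p
    - ∑ l, christoffel G Ginv l κ μ p * ricci G Ginv l ν p
    - ∑ l, christoffel G Ginv l κ ν p * ricci G Ginv μ l p

/-- The Cotton–York tensor
`C_{μνκ} = R_{μν;κ} − R_{κν;μ} + (1/4)(R_{;ν} g_{μκ} − R_{;κ} g_{μν})`. -/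
noncomputable def cottonYork (G Ginv : (Fin 3 → ℝ) → Matrix (Fin 3) (Fin 3) ℝ)
    (μ ν κ : Fin 3) (p : Fin 3 → ℝ) : ℝ :=
  covRicci G Ginv μ ν κ p - covRicci G Ginv κ ν μ p
    + (1 / 4) * (pd ν (scalarCurv G Ginv) p * G p μ κ
        - pd κ (scalarCurv G Ginv) p * G p μ ν)

/- ============ auxiliary lemmas ============ -/

lemma pd_const (i : Fin 3) (c : ℝ) (p : Fin 3 → ℝ) : pd i (fun _ => c) p = 0 := by
  simp [pd]

lemma pd_neg (i : Fin 3) (f : (Fin 3 → ℝ) → ℝ) (p : Fin 3 → ℝ) :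
    pd i (fun x => -(f x)) p = -(pd i f p) := by
  simp [pd, deriv.neg]

lemma upd00 (p : Fin 3 → ℝ) (s : ℝ) : Function.update p 0 s 0 = s := Function.update_self _ _ _
lemma upd01 (p : Fin 3 → ℝ) (s : ℝ) : Function.update p 0 s 1 = p 1 := Function.update_of_ne (by decide) _ _
lemma upd10 (p : Fin 3 → ℝ) (s : ℝ) : Function.update p 1 s 0 = p 0 := Function.update_of_ne (by decide) _ _
lemma upd11 (p : Fin 3 → ℝ) (s : ℝ) : Function.update p 1 s 1 = s := Function.update_self _ _ _
lemma upd20 (p : Fin 3 → ℝ) (s : ℝ) : Function.update p 2 s 0 = p 0 := Function.update_of_ne (by decide) _ _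
lemma upd21 (p : Fin 3 → ℝ) (s : ℝ) : Function.update p 2 s 1 = p 1 := Function.update_of_ne (by decide) _ _

lemma hasD0 (V₀ : ℝ) (p : Fin 3 → ℝ) :
    HasDerivAt (fun s => V₀ * Real.exp (s - p 1)) (V₀ * Real.exp (p 0 - p 1)) (p 0) := by
  simpa using ((hasDerivAt_id (p 0)).sub_const (p 1)).exp.const_mul V₀

lemma hasD1 (V₀ : ℝ) (p : Fin 3 → ℝ) :
    HasDerivAt (fun s => V₀ * Real.exp (p 0 - s)) (-(V₀ * Real.exp (p 0 - p 1))) (p 1) := by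
  have := (((hasDerivAt_id (p 1)).const_sub (p 0)).exp.const_mul V₀)
  simpa [mul_comm] using this

lemma pd_invE_0 (V₀ : ℝ) (hV₀ : V₀ ≠ 0) (p : Fin 3 → ℝ) :
    pd 0 (fun x => (V₀ * Real.exp (x 0 - x 1))⁻¹) p = -(V₀ * Real.exp (p 0 - p 1))⁻¹ := by
  unfold pd
  simp only [upd00, upd01]
  have hne : V₀ * Real.exp (p 0 - p 1) ≠ 0 := by positivity
  rw [((hasD0 V₀ p).fun_inv hne).deriv]
  field_simp

lemma pd_invE_1 (V₀ : ℝ) (hV₀ : V₀ ≠ 0) (p : Fin 3 → ℝ) :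
    pd 1 (fun x => (V₀ * Real.exp (x 0 - x 1))⁻¹) p = (V₀ * Real.exp (p 0 - p 1))⁻¹ := by
  unfold pd
  simp only [upd10, upd11]
  have hne : V₀ * Real.exp (p 0 - p 1) ≠ 0 := by positivity
  rw [((hasD1 V₀ p).fun_inv hne).deriv]
  field_simp

lemma pd_invE_2 (V₀ : ℝ) (p : Fin 3 → ℝ) :
    pd 2 (fun x => (V₀ * Real.exp (x 0 - x 1))⁻¹) p = 0 := by
  unfold pd
  simp only [upd20, upd21]
  simp

lemma pd_inv2E_0 (V₀ : ℝ) (hV₀ : V₀ ≠ 0) (p : Fin 3 → ℝ) :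
    pd 0 (fun x => (2 * (V₀ * Real.exp (x 0 - x 1)))⁻¹) p
      = -(2 * (V₀ * Real.exp (p 0 - p 1)))⁻¹ := by
  unfold pd
  simp only [upd00, upd01]
  have hne : 2 * (V₀ * Real.exp (p 0 - p 1)) ≠ 0 := by positivity
  rw [(((hasD0 V₀ p).const_mul 2).fun_inv hne).deriv]
  field_simp

lemma pd_inv2E_1 (V₀ : ℝ) (hV₀ : V₀ ≠ 0) (p : Fin 3 → ℝ) :
    pd 1 (fun x => (2 * (V₀ * Real.exp (x 0 - x 1)))⁻¹) p
      = (2 * (V₀ * Real.exp (p 0 - p 1)))⁻¹ := by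
  unfold pd
  simp only [upd10, upd11]
  have hne : 2 * (V₀ * Real.exp (p 0 - p 1)) ≠ 0 := by positivity
  rw [(((hasD1 V₀ p).const_mul 2).fun_inv hne).deriv]
  field_simp

lemma pd_inv2E_2 (V₀ : ℝ) (p : Fin 3 → ℝ) :
    pd 2 (fun x => (2 * (V₀ * Real.exp (x 0 - x 1)))⁻¹) p = 0 := by
  unfold pd
  simp only [upd20, upd21]
  simp

/-- closed form of the Christoffel symbols -/
noncomputable def Gam (V₀ : ℝ) (k i j : Fin 3) (p : Fin 3 → ℝ) : ℝ :=
  if k = 2 ∧ ((i = 0 ∧ j = 2) ∨ (i = 2 ∧ j = 0)) then -(1/2)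
  else if k = 2 ∧ ((i = 1 ∧ j = 2) ∨ (i = 2 ∧ j = 1)) then (1/2)
  else if k = 0 ∧ i = 2 ∧ j = 2 then (2 * (V₀ * Real.exp (p 0 - p 1)))⁻¹
  else if k = 1 ∧ i = 2 ∧ j = 2 then -(2 * (V₀ * Real.exp (p 0 - p 1)))⁻¹
  else 0

/-- closed form of the Ricci tensor -/
noncomputable def Ric (V₀ : ℝ) (i j : Fin 3) (p : Fin 3 → ℝ) : ℝ :=
  if (i = 0 ∧ j = 0) ∨ (i = 1 ∧ j = 1) then -(1/4)
  else if (i = 0 ∧ j = 1) ∨ (i = 1 ∧ j = 0) then (1/4)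
  else if i = 2 ∧ j = 2 then -(2 * (V₀ * Real.exp (p 0 - p 1)))⁻¹
  else 0

lemma fin3cases : ∀ k : Fin 3, k = 0 ∨ k = 1 ∨ k = 2 := by decide

lemma christoffel_eq (V₀ : ℝ) (hV₀ : V₀ ≠ 0)
    (G Ginv : (Fin 3 → ℝ) → Matrix (Fin 3) (Fin 3) ℝ)
    (hG : G = fun p => Matrix.diagonal ![1, 1, (V₀ * Real.exp (p 0 - p 1))⁻¹])
    (hGinv : Ginv = fun p => Matrix.diagonal ![1, 1, V₀ * Real.exp (p 0 - p 1)])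
    (k i j : Fin 3) (p : Fin 3 → ℝ) :
    christoffel G Ginv k i j p = Gam V₀ k i j p := by
  subst hG hGinv
  have hne : V₀ * Real.exp (p 0 - p 1) ≠ 0 := by positivity
  rcases fin3cases k with rfl|rfl|rfl <;> rcases fin3cases i with rfl|rfl|rfl <;> rcases fin3cases j with rfl|rfl|rfl <;>
    · unfold christoffel
      simp only [Gam, Ric, Fin.sum_univ_three, Fin.isValue, Matrix.diagonal_apply,
        Matrix.cons_val_zero, Matrix.cons_val_one, Matrix.head_cons, Matrix.cons_val_two,
        Matrix.tail_cons, Fin.reduceEq, reduceIte, reduceCtorEq, and_true, and_false,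
        false_and, true_and, or_false, false_or, or_true, true_or, pd_const, pd_neg,
        pd_invE_0 V₀ hV₀, pd_invE_1 V₀ hV₀, pd_invE_2 V₀,
        pd_inv2E_0 V₀ hV₀, pd_inv2E_1 V₀ hV₀, pd_inv2E_2 V₀]
      try norm_num
      try field_simp
      try ring

set_option maxHeartbeats 2000000 in
lemma ricci_eq (V₀ : ℝ) (hV₀ : V₀ ≠ 0)
    (G Ginv : (Fin 3 → ℝ) → Matrix (Fin 3) (Fin 3) ℝ)
    (hG : G = fun p => Matrix.diagonal ![1, 1, (V₀ * Real.exp (p 0 - p 1))⁻¹])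
    (hGinv : Ginv = fun p => Matrix.diagonal ![1, 1, V₀ * Real.exp (p 0 - p 1)])
    (i j : Fin 3) (p : Fin 3 → ℝ) :
    ricci G Ginv i j p = Ric V₀ i j p := by
  have hne : V₀ * Real.exp (p 0 - p 1) ≠ 0 := by positivity
  have h2ne : 2 * (V₀ * Real.exp (p 0 - p 1)) ≠ 0 := by positivity
  unfold ricci
  simp only [christoffel_eq V₀ hV₀ G Ginv hG hGinv]
  rcases fin3cases i with rfl|rfl|rfl <;> rcases fin3cases j with rfl|rfl|rfl <;>
    · simp only [Gam, Ric, Fin.sum_univ_three, Fin.isValue, Matrix.diagonal_apply,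
        Matrix.cons_val_zero, Matrix.cons_val_one, Matrix.head_cons, Matrix.cons_val_two,
        Matrix.tail_cons, Fin.reduceEq, reduceIte, reduceCtorEq, and_true, and_false,
        false_and, true_and, or_false, false_or, or_true, true_or, pd_const, pd_neg,
        pd_invE_0 V₀ hV₀, pd_invE_1 V₀ hV₀, pd_invE_2 V₀,
        pd_inv2E_0 V₀ hV₀, pd_inv2E_1 V₀ hV₀, pd_inv2E_2 V₀]
      try norm_num
      try field_simp
      try ring

lemma scalarCurv_eq (V₀ : ℝ) (hV₀ : V₀ ≠ 0)
    (G Ginv : (Fin 3 → ℝ) → Matrix (Fin 3) (Fin 3) ℝ)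
    (hG : G = fun p => Matrix.diagonal ![1, 1, (V₀ * Real.exp (p 0 - p 1))⁻¹])
    (hGinv : Ginv = fun p => Matrix.diagonal ![1, 1, V₀ * Real.exp (p 0 - p 1)])
    (p : Fin 3 → ℝ) : scalarCurv G Ginv p = -1 := by
  have hne : V₀ * Real.exp (p 0 - p 1) ≠ 0 := by positivity
  unfold scalarCurv
  simp only [ricci_eq V₀ hV₀ G Ginv hG hGinv]
  rw [hGinv]
  simp only [Ric, Fin.sum_univ_three, Fin.isValue, Matrix.diagonal_apply,
    Matrix.cons_val_zero, Matrix.cons_val_one, Matrix.head_cons, Matrix.cons_val_two,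
    Matrix.tail_cons, Fin.reduceEq, reduceIte, reduceCtorEq, and_true, and_false,
    false_and, true_and, or_false, false_or, or_true, true_or]
  field_simp
  ring

set_option maxHeartbeats 4000000 in
/-- The three-dimensional Riemannian metric
`ds² = dq₁² + dq₂² + (V₀ e^{q₁−q₂} − h)⁻¹ dz²` has vanishing Cotton–York tensor
(i.e. is conformally flat) when `h = 0`. -/
theorem stmt7 (V₀ h : ℝ) (hV₀ : V₀ ≠ 0) (hh : h = 0)
    (G Ginv : (Fin 3 → ℝ) → Matrix (Fin 3) (Fin 3) ℝ)
    (hG : G = fun p => Matrix.diagonal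
      ![1, 1, (V₀ * Real.exp (p 0 - p 1) - h)⁻¹])
    (hGinv : Ginv = fun p => Matrix.diagonal
      ![1, 1, V₀ * Real.exp (p 0 - p 1) - h]) :
    ∀ p : Fin 3 → ℝ, 0 < V₀ * Real.exp (p 0 - p 1) - h →
      ∀ μ ν κ : Fin 3, cottonYork G Ginv μ ν κ p = 0 := by
  subst hh
  simp only [sub_zero] at hG hGinv
  intro p hp μ ν κ
  have hne : V₀ * Real.exp (p 0 - p 1) ≠ 0 := by positivity
  have h2ne : 2 * (V₀ * Real.exp (p 0 - p 1)) ≠ 0 := by positivity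
  have hscal : scalarCurv G Ginv = fun _ => (-1 : ℝ) :=
    funext fun q => scalarCurv_eq V₀ hV₀ G Ginv hG hGinv q
  unfold cottonYork covRicci
  rw [hscal]
  simp only [pd_const, ricci_eq V₀ hV₀ G Ginv hG hGinv,
    christoffel_eq V₀ hV₀ G Ginv hG hGinv]
  rcases fin3cases μ with rfl|rfl|rfl <;> rcases fin3cases ν with rfl|rfl|rfl <;> rcases fin3cases κ with rfl|rfl|rfl <;>
    · simp only [Gam, Ric, Fin.sum_univ_three, Fin.isValue, Matrix.diagonal_apply,
        Matrix.cons_val_zero, Matrix.cons_val_one, Matrix.head_cons, Matrix.cons_val_two,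
        Matrix.tail_cons, Fin.reduceEq, reduceIte, reduceCtorEq, and_true, and_false,
        false_and, true_and, or_false, false_or, or_true, true_or, pd_const, pd_neg,
        pd_invE_0 V₀ hV₀, pd_invE_1 V₀ hV₀, pd_invE_2 V₀,
        pd_inv2E_0 V₀ hV₀, pd_inv2E_1 V₀ hV₀, pd_inv2E_2 V₀]
      try norm_num
      try field_simp
      try ring
end

section
/- The two-dimensional Lorentzian metric ds² = (v/u² − Λuv − h)^{-1} du dv has scalar curvature R = −4h(2 + Λu³) / [u(v(Λu³ − 1) + h u²)]; in particular R = 0 identically if and only if h = 0. -/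
/-- The two-dimensional Lorentzian metric
`ds² = (v/u² − Λuv − h)⁻¹ du dv` has scalar curvature
`R = −4h(2 + Λu³) / [u(v(Λu³ − 1) + hu²)]`; in particular `R = 0` identically if
and only if `h = 0`.  For a metric `Φ⁻¹ du dv` the Ricci scalar is
`R = 4 Φ ∂u ∂v log Φ` with `Φ = v/u² − Λuv − h`. -/
theorem stmt9 (Λ h : ℝ) (Φ : ℝ → ℝ → ℝ)
    (hΦ : Φ = fun u v => v / u ^ 2 - Λ * u * v - h)
    (R : ℝ → ℝ → ℝ)
    (hR : R = fun u v => 4 * Φ u v *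
      deriv (fun a => deriv (fun b => Real.log (Φ a b)) v) u) :
    (∀ u v : ℝ, 0 < u → 0 < v → Φ u v ≠ 0 →
        v * (Λ * u ^ 3 - 1) + h * u ^ 2 ≠ 0 →
        R u v = -(4 * h * (2 + Λ * u ^ 3)) /
          (u * (v * (Λ * u ^ 3 - 1) + h * u ^ 2))) ∧
    ((∀ u v : ℝ, 0 < u → 0 < v → Φ u v ≠ 0 →
        v * (Λ * u ^ 3 - 1) + h * u ^ 2 ≠ 0 → R u v = 0) ↔ h = 0) := by
  have key : ∀ u v : ℝ, 0 < u → 0 < v → Φ u v ≠ 0 →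
      v * (Λ * u ^ 3 - 1) + h * u ^ 2 ≠ 0 →
      R u v = -(4 * h * (2 + Λ * u ^ 3)) /
        (u * (v * (Λ * u ^ 3 - 1) + h * u ^ 2)) := by
    intro u v hu hv hΦ0 hden
    have hu0 : u ≠ 0 := ne_of_gt hu
    have hΦ0' : v / u ^ 2 - Λ * u * v - h ≠ 0 := by
      simpa [hΦ] using hΦ0
    -- continuity of a ↦ Φ a v at u
    have hcont : ContinuousAt (fun a : ℝ => v / a ^ 2 - Λ * a * v - h) u := by
      have h1 : ContinuousAt (fun a : ℝ => v / a ^ 2) u :=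
        continuousAt_const.div (continuousAt_pow u 2) (pow_ne_zero 2 hu0)
      have h2 : ContinuousAt (fun a : ℝ => Λ * a * v) u :=
        ((continuousAt_const.mul continuousAt_id).mul continuousAt_const)
      exact (h1.sub h2).sub continuousAt_const
    have hev : ∀ᶠ a in nhds u, 0 < a ∧ v / a ^ 2 - Λ * a * v - h ≠ 0 :=
      (eventually_gt_nhds hu).and (hcont.eventually_ne hΦ0')
    -- the inner derivative, eventually in a
    have hEq : (fun a => deriv (fun b => Real.log (Φ a b)) v) =ᶠ[nhds u]
        (fun a => (1 / a ^ 2 - Λ * a) / (v / a ^ 2 - Λ * a * v - h)) := by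
      filter_upwards [hev] with a ha
      obtain ⟨ha0, hΦa⟩ := ha
      have hib : HasDerivAt (fun b : ℝ => b / a ^ 2 - Λ * a * b - h)
          (1 / a ^ 2 - Λ * a) v := by
        have := (((hasDerivAt_id v).div_const (a ^ 2)).sub
          ((hasDerivAt_id v).const_mul (Λ * a))).sub_const h
        simpa using this
      have hlog : HasDerivAt (fun b : ℝ => Real.log (b / a ^ 2 - Λ * a * b - h))
          ((1 / a ^ 2 - Λ * a) / (v / a ^ 2 - Λ * a * v - h)) v := hib.log hΦa
      rw [hΦ]
      exact hlog.deriv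
    -- the outer derivative
    have hN : HasDerivAt (fun a : ℝ => 1 / a ^ 2 - Λ * a)
        (-(2 * u) / (u ^ 2) ^ 2 - Λ) u := by
      have h1 : HasDerivAt (fun a : ℝ => 1 / a ^ 2) (-(2 * u) / (u ^ 2) ^ 2) u := by
        have := (hasDerivAt_pow 2 u).inv (pow_ne_zero 2 hu0)
        simpa [one_div, Pi.inv_def] using this
      simpa [Pi.sub_def] using h1.sub ((hasDerivAt_id u).const_mul Λ)
    have hD : HasDerivAt (fun a : ℝ => v / a ^ 2 - Λ * a * v - h)
        (v * (-(2 * u) / (u ^ 2) ^ 2) - Λ * v) u := by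
      have h1 : HasDerivAt (fun a : ℝ => v / a ^ 2) (v * (-(2 * u) / (u ^ 2) ^ 2)) u := by
        have := ((hasDerivAt_pow 2 u).inv (pow_ne_zero 2 hu0)).const_mul v
        simpa [div_eq_mul_inv] using this
      have h2 : HasDerivAt (fun a : ℝ => Λ * a * v) (Λ * v) u := by
        have := ((hasDerivAt_id u).const_mul Λ).mul_const v
        simpa using this
      simpa using (h1.sub h2).sub_const h
    have hF : HasDerivAt (fun a : ℝ => (1 / a ^ 2 - Λ * a) / (v / a ^ 2 - Λ * a * v - h))
        (((-(2 * u) / (u ^ 2) ^ 2 - Λ) * (v / u ^ 2 - Λ * u * v - h) -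
          (1 / u ^ 2 - Λ * u) * (v * (-(2 * u) / (u ^ 2) ^ 2) - Λ * v)) /
          (v / u ^ 2 - Λ * u * v - h) ^ 2) u := hN.div hD hΦ0'
    have hderiv : deriv (fun a => deriv (fun b => Real.log (Φ a b)) v) u =
        ((-(2 * u) / (u ^ 2) ^ 2 - Λ) * (v / u ^ 2 - Λ * u * v - h) -
          (1 / u ^ 2 - Λ * u) * (v * (-(2 * u) / (u ^ 2) ^ 2) - Λ * v)) /
          (v / u ^ 2 - Λ * u * v - h) ^ 2 := by
      rw [hEq.deriv_eq]
      exact hF.deriv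
    rw [hR]
    simp only
    rw [hderiv, hΦ]
    simp only
    set d : ℝ := v / u ^ 2 - Λ * u * v - h with hd_def
    have hd : d ≠ 0 := hΦ0'
    have hnum : (-(2 * u) / (u ^ 2) ^ 2 - Λ) * d -
        (1 / u ^ 2 - Λ * u) * (v * (-(2 * u) / (u ^ 2) ^ 2) - Λ * v) =
        -h * (-(2 * u) / (u ^ 2) ^ 2 - Λ) := by
      rw [hd_def]; ring
    rw [hnum]
    have hL : ∀ X : ℝ, 4 * d * (X / d ^ 2) = 4 * X / d := by
      intro X
      calc 4 * d * (X / d ^ 2) = 4 * (X / d / d * d) := by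
            rw [pow_two, ← div_div]; ring
        _ = 4 * (X / d) := by rw [div_mul_cancel₀ _ hd]
        _ = 4 * X / d := (mul_div_assoc 4 X d).symm
    rw [hL, div_eq_div_iff hd (mul_ne_zero hu0 hden), hd_def]
    field_simp
    ring
  refine ⟨key, ?_, ?_⟩
  · -- forward direction of the iff
    intro hall
    by_contra hne
    have key' : ∀ u : ℝ, 0 < u → 2 + Λ * u ^ 3 = 0 := by
      intro u hu
      have hu0 : u ≠ 0 := ne_of_gt hu
      obtain ⟨v, hv, hΦv⟩ : ∃ v : ℝ, 0 < v ∧ Φ u v ≠ 0 := by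
        by_cases hc : 1 / u ^ 2 - Λ * u = 0
        · refine ⟨1, one_pos, ?_⟩
          rw [hΦ]
          simp only
          intro h0
          apply hne
          have : (1 : ℝ) / u ^ 2 - Λ * u * 1 - h = 0 := h0
          nlinarith [hc, this]
        · by_cases h1 : Φ u 1 ≠ 0
          · exact ⟨1, one_pos, h1⟩
          · push_neg at h1
            refine ⟨2, two_pos, ?_⟩
            rw [hΦ] at h1 ⊢
            simp only at h1 ⊢
            intro h2
            apply hc
            have h1' : (1:ℝ) - Λ * u ^ 3 - h * u ^ 2 = 0 := by
              field_simp at h1; nlinarith [h1, sq_nonneg u]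
            have h2' : (2:ℝ) - 2 * (Λ * u ^ 3) - h * u ^ 2 = 0 := by
              field_simp at h2; nlinarith [h2, sq_nonneg u]
            have h3 : Λ * u ^ 3 = 1 := by linarith
            field_simp
            nlinarith [h3]
      have hden : v * (Λ * u ^ 3 - 1) + h * u ^ 2 ≠ 0 := by
        intro hd
        apply hΦv
        have hrel : u ^ 2 * Φ u v = -(v * (Λ * u ^ 3 - 1) + h * u ^ 2) := by
          rw [hΦ]; field_simp; ring
        rw [hd] at hrel
        have : u ^ 2 * Φ u v = 0 := by simpa using hrel
        rcases mul_eq_zero.mp this with h' | h'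
        · exact absurd h' (pow_ne_zero 2 hu0)
        · exact h'
      have h0 := hall u v hu hv hΦv hden
      have heq := (key u v hu hv hΦv hden).symm.trans h0
      rcases div_eq_zero_iff.mp heq with hnum | hd
      · have h4 : h * (2 + Λ * u ^ 3) = 0 := by linarith
        rcases mul_eq_zero.mp h4 with h' | h'
        · exact absurd h' hne
        · exact h'
      · exact absurd hd (mul_ne_zero hu0 hden)
    have e1 := key' 1 one_pos
    have e2 := key' 2 two_pos
    norm_num at e1 e2
    linarith
  · -- reverse direction
    intro h0 u v hu hv hΦ0 hden
    rw [key u v hu hv hΦ0 hden, h0]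
    norm_num
end

section
/- The vector fields X₁ = (1/v)∂_v, X₂ = u²∂_u, X₃ = v∂_v + 2u∂_u are Noether point symmetries of the singular Szekeres Lagrangian L(N,u,\dot u,v,\dot v) = (\dot u\dot v)/N − N v/u²; equivalently, X₁, X₂, (1/2)X₃ are Killing vector fields of the 2-dimensional Jacobi metric \bar g = (v/u²) du dv. -/
open Finset

/-- Partial derivative of a scalar function on `ℝ²` in the `i`-th coordinate
direction. -/
noncomputable def pd2 (i : Fin 2) (f : (Fin 2 → ℝ) → ℝ) (p : Fin 2 → ℝ) : ℝ :=
  deriv (fun s => f (Function.update p i s)) (p i)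

/-- Lie derivative of a metric `g` along a vector field `X` on `ℝ²`:
`(L_X g)_{ab} = Xᶜ ∂_c g_{ab} + g_{cb} ∂_a Xᶜ + g_{ac} ∂_b Xᶜ`. -/
noncomputable def lieDerivMetric (g : (Fin 2 → ℝ) → Matrix (Fin 2) (Fin 2) ℝ)
    (X : (Fin 2 → ℝ) → Fin 2 → ℝ) (a b : Fin 2) (p : Fin 2 → ℝ) : ℝ :=
  (∑ c, X p c * pd2 c (fun x => g x a b) p)
    + (∑ c, g p c b * pd2 a (fun x => X x c) p)
    + (∑ c, g p a c * pd2 b (fun x => X x c) p)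

lemma dconst (c x : ℝ) : deriv (fun _ : ℝ => c) x = 0 := deriv_const x c

lemma dhalfinv (c x : ℝ) (hx : x ≠ 0) :
    deriv (fun s : ℝ => c / (2 * s ^ 2)) x = -c / x ^ 3 := by
  have h1 : HasDerivAt (fun s : ℝ => 2 * s ^ 2) (4 * x) x := by
    have := (hasDerivAt_pow 2 x).const_mul 2
    simpa using this.congr_deriv (by push_cast; ring)
  have h : HasDerivAt (fun s : ℝ => c / (2 * s ^ 2))
      ((0 * (2 * x ^ 2) - c * (4 * x)) / (2 * x ^ 2) ^ 2) x :=
    (hasDerivAt_const x c).div h1 (by positivity)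
  rw [h.deriv]; field_simp; ring

lemma dlin (c x : ℝ) : deriv (fun s : ℝ => s / (2 * c ^ 2)) x = 1 / (2 * c ^ 2) := by
  simp [deriv_div_const]

lemma dinv (x : ℝ) : deriv (fun s : ℝ => s⁻¹) x = -(x ^ 2)⁻¹ := deriv_inv

lemma dhalfmul2 (x : ℝ) : deriv (fun s : ℝ => 1 / 2 * (2 * s)) x = 1 := by
  have := ((hasDerivAt_id' x).const_mul 2).const_mul (1/2 : ℝ)
  rw [this.deriv]; norm_num

lemma dhalf (x : ℝ) : deriv (fun s : ℝ => 1 / 2 * s) x = 1 / 2 := by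
  have := (hasDerivAt_id' x).const_mul (1/2 : ℝ)
  rw [this.deriv]; norm_num

lemma dhalfinvmul (x : ℝ) (hx : x ≠ 0) :
    deriv (fun s : ℝ => 1 / 2 * s⁻¹) x = 1 / 2 * (-(x ^ 2)⁻¹) := by
  have := (hasDerivAt_inv hx).const_mul (1/2 : ℝ)
  rw [this.deriv]

lemma dsq (x : ℝ) : deriv (fun s : ℝ => s ^ 2) x = 2 * x := by
  simpa using deriv_pow 2 (x := x)

lemma dmul2 (x : ℝ) : deriv (fun s : ℝ => 2 * s) x = 2 := by
  have := (hasDerivAt_id' x).const_mul (2 : ℝ)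
  rw [this.deriv]; norm_num

/-- The vector fields `X₁ = (1/v)∂_v`, `X₂ = u²∂_u`,
`X₃ = v∂_v + 2u∂_u` are Noether point symmetries of the singular Szekeres
Lagrangian `L = (u̇v̇)/N − N v/u²`; equivalently, `X₁`, `X₂` and `(1/2)X₃` are
Killing vector fields of the two-dimensional Jacobi metric
`ḡ = (v/u²) du dv`, i.e. `ḡ_{uv} = ḡ_{vu} = v/(2u²)` (coordinates
`u = p 0 > 0`, `v = p 1 > 0`): the Lie derivative of `ḡ` along each field
vanishes. -/
theorem stmt11 (g : (Fin 2 → ℝ) → Matrix (Fin 2) (Fin 2) ℝ)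
    (hg : g = fun p => Matrix.of
      ![![0, p 1 / (2 * (p 0) ^ 2)], ![p 1 / (2 * (p 0) ^ 2), 0]])
    (X₁ X₂ X₃ : (Fin 2 → ℝ) → Fin 2 → ℝ)
    (hX₁ : X₁ = fun p => ![0, (p 1)⁻¹])
    (hX₂ : X₂ = fun p => ![(p 0) ^ 2, 0])
    (hX₃ : X₃ = fun p => ![2 * p 0, p 1]) :
    ∀ p : Fin 2 → ℝ, 0 < p 0 → 0 < p 1 → ∀ a b : Fin 2,
      lieDerivMetric g X₁ a b p = 0 ∧
      lieDerivMetric g X₂ a b p = 0 ∧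
      lieDerivMetric g (fun q i => (1 / 2) * X₃ q i) a b p = 0 := by
  subst hg hX₁ hX₂ hX₃
  intro p hu hv a b
  have hu' : p 0 ≠ 0 := ne_of_gt hu
  have hv' : p 1 ≠ 0 := ne_of_gt hv
  fin_cases a <;> fin_cases b <;>
    refine ⟨?_, ?_, ?_⟩ <;>
    · simp only [lieDerivMetric, pd2, Fin.sum_univ_two, Matrix.of_apply,
        Matrix.cons_val_zero, Matrix.cons_val_one, Matrix.head_cons,
        Function.update_self, Function.update_of_ne (by decide : (0 : Fin 2) ≠ 1),
        Function.update_of_ne (by decide : (1 : Fin 2) ≠ 0),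
        Fin.mk_zero, Fin.mk_one, Fin.isValue]
      simp only [dconst, dhalfinv _ _ hu', dlin, dinv, dsq, dmul2, dhalfmul2,
        dhalf, dhalfinvmul _ hv']
      all_goals field_simp
      all_goals ring
end
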